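/- arXiv:0710.0768 — 2 statements merged into one kernel-verified Lean document; each statement's English description precedes it below -/
import Mathlib

section
/- Suppose the Floquet operator U(T,0) has a pure point spectrum and admits an orthonormal basis ℬ of ℋ consisting of eigenvectors of U(T,0) all belonging to ℋ₁. Then for every initial state ψ ∈ span ℬ (finite linear combinations of vectors from ℬ), the energy is bounded in the course of time: sup_{t∈ℝ} |q(t)(U(t,0)ψ, U(t,0)ψ)| < ∞. -/
/-!
The energy is controlled by the form norm of `ℋ₁ = Dom q(0)`, which is a Hilbert space because
`q(0)` is closed. For an eigenvector `v` of the Floquet operator with eigenvalue `c` (`|c| = 1`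
since `U` is unitary), the trajectory satisfies `U(t + T, 0) v = c U(t, 0) v`, so each
`ℋ₁`-weakly continuous pairing `t ↦ ⟨g, U(t, 0) v⟩₁` has periodic modulus and is bounded.
By the uniform boundedness principle the trajectory is bounded in `ℋ₁`, hence so is that of
every finite combination of eigenvectors, and the comparison `q(t) ≤ C (q(0) + 1)` bounds
the energy.
-/

open Filter

/-- The form norm `‖u‖₁ = (‖u‖² + q(0)(u,u))^{1/2}` associated with the form family `q`. -/
noncomputable def formNorm {ℋ : Type*} [NormedAddCommGroup ℋ] [InnerProductSpace ℂ ℋ]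
    (q : ℝ → ℋ → ℋ → ℂ) (u : ℋ) : ℝ :=
  Real.sqrt (‖u‖ ^ 2 + (q 0 u u).re)

open Topology Function
open scoped InnerProductSpace

section

variable {ℋ : Type*} [NormedAddCommGroup ℋ] [InnerProductSpace ℂ ℋ]

theorem re_inner_self_eq_norm_sq_complex (x : ℋ) : (⟪x, x⟫_ℂ).re = ‖x‖ ^ 2 := by
  simpa using inner_self_eq_norm_sq (𝕜 := ℂ) x

structure IsPosHermForm (D : Submodule ℂ ℋ) (a : ℋ → ℋ → ℂ) : Prop where
  smul_left : ∀ (c : ℂ) (u v : ℋ), u ∈ D → v ∈ D → a (c • u) v = starRingEnd ℂ c * a u v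
  add_left : ∀ u u' v : ℋ, u ∈ D → u' ∈ D → v ∈ D → a (u + u') v = a u v + a u' v
  conj_symm : ∀ u v : ℋ, u ∈ D → v ∈ D → a u v = starRingEnd ℂ (a v u)
  re_nonneg : ∀ u ∈ D, 0 ≤ (a u u).re

def IsClosedForm (D : Submodule ℂ ℋ) (a : ℋ → ℋ → ℂ) : Prop :=
  ∀ u : ℕ → ℋ, (∀ n, u n ∈ D) → ∀ L : ℋ, Tendsto u atTop (𝓝 L) →
    (∀ ε > (0 : ℝ), ∃ N, ∀ m ≥ N, ∀ n ≥ N, ‖u m - u n‖ ^ 2 + (a (u m - u n) (u m - u n)).re < ε) →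
    L ∈ D ∧ Tendsto (fun n => (a (u n - L) (u n - L)).re) atTop (𝓝 0)

/-- The form domain `ℋ₁` as a type synonym for `D`, to carry the inner product
`⟪u, v⟫ + a u v`. The positivity proof is a parameter of the type so that the instances below
need no hypotheses. -/
def FormDomain (D : Submodule ℂ ℋ) (a : ℋ → ℋ → ℂ) (_ : IsPosHermForm D a) : Type _ := D

namespace FormDomain

variable {D : Submodule ℂ ℋ} {a : ℋ → ℋ → ℂ} {ha : IsPosHermForm D a}

instance : AddCommGroup (FormDomain D a ha) := inferInstanceAs (AddCommGroup D)

instance : Module ℂ (FormDomain D a ha) := inferInstanceAs (Module ℂ D)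

variable (ha) in
def equiv : D ≃ₗ[ℂ] FormDomain D a ha := LinearEquiv.refl ℂ D

def val (x : FormDomain D a ha) : ℋ := ((equiv ha).symm x : ℋ)

theorem val_mem (x : FormDomain D a ha) : x.val ∈ D := ((equiv ha).symm x).2

@[simp] theorem val_equiv (x : D) : (equiv ha x).val = x := rfl

theorem val_injective : Injective (val : FormDomain D a ha → ℋ) :=
  Subtype.val_injective.comp (equiv ha).symm.injective

@[simp] theorem val_smul (c : ℂ) (x : FormDomain D a ha) : (c • x).val = c • x.val := rfl

@[simp] theorem val_sub (x y : FormDomain D a ha) : (x - y).val = x.val - y.val := rfl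

noncomputable instance : InnerProductSpace.Core ℂ (FormDomain D a ha) where
  inner x y := ⟪x.val, y.val⟫_ℂ + a x.val y.val
  conj_inner_symm x y := by
    simp only [map_add, inner_conj_symm, ← ha.conj_symm _ _ x.val_mem y.val_mem]
  re_inner_nonneg x := by
    show 0 ≤ (⟪x.val, x.val⟫_ℂ + a x.val x.val).re
    rw [Complex.add_re, re_inner_self_eq_norm_sq_complex]
    exact add_nonneg (sq_nonneg _) (ha.re_nonneg _ x.val_mem)
  add_left x y z := by
    show ⟪x.val + y.val, z.val⟫_ℂ + a (x.val + y.val) z.val = _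
    rw [inner_add_left, ha.add_left _ _ _ x.val_mem y.val_mem z.val_mem]
    ring
  smul_left x y c := by
    show ⟪c • x.val, y.val⟫_ℂ + a (c • x.val) y.val = _
    rw [inner_smul_left, ha.smul_left _ _ _ x.val_mem y.val_mem]
    ring
  definite x hx := by
    have hre := congrArg Complex.re hx
    rw [Complex.add_re, re_inner_self_eq_norm_sq_complex, Complex.zero_re] at hre
    have : ‖x.val‖ = 0 := by nlinarith [ha.re_nonneg _ x.val_mem, norm_nonneg x.val]
    exact Subtype.ext (norm_eq_zero.mp this)

noncomputable instance : NormedAddCommGroup (FormDomain D a ha) :=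
  InnerProductSpace.Core.toNormedAddCommGroup (𝕜 := ℂ)

noncomputable instance : InnerProductSpace ℂ (FormDomain D a ha) := InnerProductSpace.ofCore _

theorem inner_def (x y : FormDomain D a ha) : ⟪x, y⟫_ℂ = ⟪x.val, y.val⟫_ℂ + a x.val y.val := rfl

theorem norm_sq_eq (x : FormDomain D a ha) : ‖x‖ ^ 2 = ‖x.val‖ ^ 2 + (a x.val x.val).re := by
  rw [← inner_self_eq_norm_sq (𝕜 := ℂ), RCLike.re_to_complex, inner_def, Complex.add_re,
    re_inner_self_eq_norm_sq_complex]

theorem norm_val_le (x : FormDomain D a ha) : ‖x.val‖ ≤ ‖x‖ := by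
  refine le_of_sq_le_sq ?_ (norm_nonneg _)
  rw [norm_sq_eq]
  linarith [ha.re_nonneg _ x.val_mem]

theorem lipschitzWith_val : LipschitzWith 1 (val : FormDomain D a ha → ℋ) :=
  LipschitzWith.of_dist_le_mul fun x y => by
    simpa [dist_eq_norm] using norm_val_le (x - y)

theorem completeSpace_of_isClosedForm [CompleteSpace ℋ] (hD : IsClosedForm D a) :
    CompleteSpace (FormDomain D a ha) := by
  refine Metric.complete_of_cauchySeq_tendsto fun u hu => ?_
  obtain ⟨L, hL⟩ :=
    cauchySeq_tendsto_of_complete (lipschitzWith_val.uniformContinuous.comp_cauchySeq hu)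
  have hcauchy : ∀ ε > (0 : ℝ), ∃ N, ∀ m ≥ N, ∀ n ≥ N, ‖(u m).val - (u n).val‖ ^ 2 +
      (a ((u m).val - (u n).val) ((u m).val - (u n).val)).re < ε := by
    intro ε hε
    obtain ⟨N, hN⟩ := Metric.cauchySeq_iff.mp hu _ (Real.sqrt_pos.mpr hε)
    refine ⟨N, fun m hm n hn => ?_⟩
    rw [← val_sub, ← norm_sq_eq, ← Real.lt_sqrt (norm_nonneg _), ← dist_eq_norm]
    exact hN m hm n hn
  obtain ⟨hLD, hform⟩ := hD _ (fun n => (u n).val_mem) L hL hcauchy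
  refine ⟨equiv ha ⟨L, hLD⟩, tendsto_iff_norm_sub_tendsto_zero.mpr ?_⟩
  have hsq : Tendsto (fun n => ‖u n - equiv ha ⟨L, hLD⟩‖ ^ 2) atTop (𝓝 0) := by
    simp only [norm_sq_eq, val_sub, val_equiv]
    simpa using ((tendsto_iff_norm_sub_tendsto_zero.mp hL).pow 2).add hform
  simpa [Real.sqrt_sq (norm_nonneg _)] using hsq.sqrt

end FormDomain

end

theorem exists_norm_le_of_mem_span {𝕜 ι V E : Type*} [NormedField 𝕜] [AddCommGroup V]
    [Module 𝕜 V] [NormedAddCommGroup E] [NormedSpace 𝕜 E] (L : ι → V →ₗ[𝕜] E) {s : Set V}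
    (hs : ∀ v ∈ s, ∃ M, ∀ i, ‖L i v‖ ≤ M) {v : V} (hv : v ∈ Submodule.span 𝕜 s) :
    ∃ M, ∀ i, ‖L i v‖ ≤ M := by
  induction hv using Submodule.span_induction with
  | mem x hx => exact hs x hx
  | zero => exact ⟨0, by simp⟩
  | add x y _ _ hx hy =>
    obtain ⟨M, hM⟩ := hx
    obtain ⟨N, hN⟩ := hy
    exact ⟨M + N, fun i => by simpa using (norm_add_le _ _).trans (add_le_add (hM i) (hN i))⟩
  | smul c x _ hx =>
    obtain ⟨M, hM⟩ := hx
    exact ⟨‖c‖ * M, fun i => by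
      rw [map_smul, norm_smul]
      exact mul_le_mul_of_nonneg_left (hM i) (norm_nonneg c)⟩

theorem exists_norm_le_of_continuous_inner_of_apply_add_eq_smul {𝕜 E : Type*} [RCLike 𝕜]
    [NormedAddCommGroup E] [InnerProductSpace 𝕜 E] [CompleteSpace E] {f : ℝ → E} {T : ℝ}
    {c : 𝕜} (hT : T ≠ 0) (hc : ‖c‖ = 1) (hf : ∀ t, f (t + T) = c • f t)
    (hcont : ∀ g, Continuous fun t => ⟪g, f t⟫_𝕜) : ∃ M, ∀ t, ‖f t‖ ≤ M := by
  have hweak : ∀ g, ∃ K, ∀ t, ‖innerSL 𝕜 (f t) g‖ ≤ K := fun g => by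
    have hper : Periodic (fun t => ‖⟪g, f t⟫_𝕜‖) T := fun t => by
      simp [hf, inner_smul_right, hc]
    obtain ⟨K, hK⟩ := (hper.isBounded_of_continuous hT (hcont g).norm).bddAbove
    exact ⟨K, fun t => by simpa [norm_inner_symm (f t)] using hK ⟨t, rfl⟩⟩
  obtain ⟨M, hM⟩ := banach_steinhaus hweak
  exact ⟨M, fun t => by simpa [innerSL_apply_norm] using hM t⟩

theorem propagator_apply_add_period_eq_smul {R E : Type*} [Semiring R] [TopologicalSpace E]
    [AddCommMonoid E] [Module R E] (U : ℝ → ℝ → E →L[R] E)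
    (hU_comp : ∀ t r s, (U t r).comp (U r s) = U t s)
    {T : ℝ} (hU_periodic : ∀ t s, U (t + T) (s + T) = U t s)
    {v : E} {c : R} (hv : U T 0 v = c • v) (t : ℝ) : U (t + T) 0 v = c • U t 0 v := by
  have hshift : U (t + T) T = U t 0 := by simpa using hU_periodic t 0
  rw [← hU_comp (t + T) T 0, ContinuousLinearMap.comp_apply, hv, hshift, map_smul]

theorem stmt_4_general
    {ℋ : Type*} [NormedAddCommGroup ℋ] [InnerProductSpace ℂ ℋ] [CompleteSpace ℋ]
    (T : ℝ) (hT : 0 < T)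
    -- the family of closed densely defined positive forms q(t) with common domain D1 = ℋ₁
    (D1 : Submodule ℂ ℋ)
    (q : ℝ → ℋ → ℋ → ℂ)
    (hq_smul : ∀ t : ℝ, ∀ c : ℂ, ∀ u v : ℋ, u ∈ D1 → v ∈ D1 →
      q t (c • u) v = (starRingEnd ℂ) c * q t u v)
    (hq_add : ∀ t : ℝ, ∀ u u' v : ℋ, u ∈ D1 → u' ∈ D1 → v ∈ D1 →
      q t (u + u') v = q t u v + q t u' v)
    (hq_herm : ∀ t : ℝ, ∀ u v : ℋ, u ∈ D1 → v ∈ D1 → q t u v = (starRingEnd ℂ) (q t v u))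
    (hq_pos : ∀ t : ℝ, ∀ u : ℋ, u ∈ D1 → 0 ≤ (q t u u).re ∧ (q t u u).im = 0)
    (hq_closed : ∀ t : ℝ, ∀ u : ℕ → ℋ, (∀ n, u n ∈ D1) → ∀ L : ℋ,
      Tendsto u atTop (nhds L) →
      (∀ ε > (0 : ℝ), ∃ N, ∀ m ≥ N, ∀ n ≥ N,
        ‖u m - u n‖ ^ 2 + (q t (u m - u n) (u m - u n)).re < ε) →
      L ∈ D1 ∧ Tendsto (fun n => (q t (u n - L) (u n - L)).re) atTop (nhds 0))
    -- assumption (1): C⁻¹(H(0)+1) ≤ H(t) ≤ C(H(0)+1), C ≥ 1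
    (C : ℝ) (hC : 1 ≤ C)
    (hcomp : ∀ t : ℝ, ∀ u : ℋ, u ∈ D1 →
      C⁻¹ * ((q 0 u u).re + ‖u‖ ^ 2) ≤ (q t u u).re ∧
        (q t u u).re ≤ C * ((q 0 u u).re + ‖u‖ ^ 2))
    -- the propagator U(t,s) of Theorem II.27 of Simon (quadratic forms)
    (U : ℝ → ℝ → ℋ →L[ℂ] ℋ)
    (hUnorm : ∀ t s : ℝ, ∀ ψ : ℋ, ‖U t s ψ‖ = ‖ψ‖)
    (hUck : ∀ t r s : ℝ, (U t r).comp (U r s) = U t s)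
    (hUper : ∀ t s : ℝ, U (t + T) (s + T) = U t s)
    (hUD1 : ∀ t : ℝ, ∀ ψ ∈ D1, U t 0 ψ ∈ D1)
    -- point 1: ℋ₁-weak continuity of the trajectories
    (hweakcont : ∀ ψ₀ ∈ D1, ∀ g ∈ D1,
      Continuous fun t => (inner ℂ g (U t 0 ψ₀) : ℂ) + q 0 g (U t 0 ψ₀))
    -- a Hilbert basis of eigenvectors of U(T,0), all in ℋ₁
    {ι : Type*} (b : HilbertBasis ι ℂ ℋ)
    (hbD1 : ∀ i, b i ∈ D1)
    (hbeig : ∀ i, ∃ c : ℂ, U T 0 (b i) = c • b i)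
    -- an initial state from the (finite) span of the basis
    (ψ : ℋ) (hψ : ψ ∈ Submodule.span ℂ (Set.range fun i => b i)) :
    ∃ M : ℝ, ∀ t : ℝ, ‖q t (U t 0 ψ) (U t 0 ψ)‖ ≤ M := by
  have ha : IsPosHermForm D1 (q 0) :=
    ⟨hq_smul 0, hq_add 0, hq_herm 0, fun u hu => (hq_pos 0 u hu).1⟩
  have := FormDomain.completeSpace_of_isClosedForm (ha := ha) (hq_closed 0)
  let Ψ : ℝ → D1 →ₗ[ℂ] FormDomain D1 (q 0) ha := fun t =>
    (FormDomain.equiv ha).toLinearMap ∘ₗ (U t 0 : ℋ →ₗ[ℂ] ℋ).restrict (hUD1 t)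
  have hΨ : ∀ t x, (Ψ t x).val = U t 0 x := fun _ _ => rfl
  have hbasis : ∀ i, ∃ M, ∀ t, ‖Ψ t ⟨b i, hbD1 i⟩‖ ≤ M := by
    intro i
    obtain ⟨c, hc⟩ := hbeig i
    refine exists_norm_le_of_continuous_inner_of_apply_add_eq_smul (c := c) hT.ne' ?_
      (fun t => ?_) (fun g => ?_)
    · simpa [hc, norm_smul, b.orthonormal.1 i] using hUnorm T 0 (b i)
    · exact FormDomain.val_injective <| by
        simpa [hΨ] using propagator_apply_add_period_eq_smul U hUck hUper hc t
    · simpa [FormDomain.inner_def, hΨ] using hweakcont _ (hbD1 i) g.val g.val_mem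
  obtain ⟨x, hx, rfl⟩ : ∃ x ∈ Submodule.span ℂ (Set.range fun i => (⟨b i, hbD1 i⟩ : D1)),
      D1.subtype x = ψ := by
    rwa [← Submodule.mem_map, ← Submodule.span_image, ← Set.range_comp]
  obtain ⟨M, hM⟩ := exists_norm_le_of_mem_span Ψ (by rintro _ ⟨i, rfl⟩; exact hbasis i) hx
  refine ⟨C * M ^ 2, fun t => ?_⟩
  have hw := hUD1 t x x.2
  calc ‖q t (U t 0 x) (U t 0 x)‖ = (q t (U t 0 x) (U t 0 x)).re := by
        rw [← Complex.abs_re_eq_norm.mpr (hq_pos t _ hw).2, abs_of_nonneg (hq_pos t _ hw).1]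
    _ ≤ C * ((q 0 (U t 0 x) (U t 0 x)).re + ‖U t 0 x‖ ^ 2) := (hcomp t _ hw).2
    _ = C * ‖Ψ t x‖ ^ 2 := by rw [FormDomain.norm_sq_eq, hΨ, add_comm]
    _ ≤ C * M ^ 2 :=
        mul_le_mul_of_nonneg_left (pow_le_pow_left₀ (norm_nonneg _) (hM t) 2) (by linarith)

/-- if the Floquet operator `U(T,0)` has pure point spectrum, with an
orthonormal (Hilbert) basis `b` of eigenvectors lying in `ℋ₁`, then for every
`ψ ∈ span b` the energy `|q(t)(U(t,0)ψ, U(t,0)ψ)|` is bounded in time. -/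
theorem stmt_4
    {ℋ : Type*} [NormedAddCommGroup ℋ] [InnerProductSpace ℂ ℋ] [CompleteSpace ℋ]
    [SecondCountableTopology ℋ]
    (T : ℝ) (hT : 0 < T)
    -- the family of closed densely defined positive forms q(t) with common domain D1 = ℋ₁
    (D1 : Submodule ℂ ℋ) (hD1dense : Dense (D1 : Set ℋ))
    (q : ℝ → ℋ → ℋ → ℂ)
    (hq_smul : ∀ t : ℝ, ∀ c : ℂ, ∀ u v : ℋ, u ∈ D1 → v ∈ D1 →
      q t (c • u) v = (starRingEnd ℂ) c * q t u v)
    (hq_add : ∀ t : ℝ, ∀ u u' v : ℋ, u ∈ D1 → u' ∈ D1 → v ∈ D1 →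
      q t (u + u') v = q t u v + q t u' v)
    (hq_herm : ∀ t : ℝ, ∀ u v : ℋ, u ∈ D1 → v ∈ D1 → q t u v = (starRingEnd ℂ) (q t v u))
    (hq_pos : ∀ t : ℝ, ∀ u : ℋ, u ∈ D1 → 0 ≤ (q t u u).re ∧ (q t u u).im = 0)
    (hq_per : ∀ t : ℝ, ∀ u v : ℋ, q (t + T) u v = q t u v)
    (hq_closed : ∀ t : ℝ, ∀ u : ℕ → ℋ, (∀ n, u n ∈ D1) → ∀ L : ℋ,
      Tendsto u atTop (nhds L) →
      (∀ ε > (0 : ℝ), ∃ N, ∀ m ≥ N, ∀ n ≥ N,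
        ‖u m - u n‖ ^ 2 + (q t (u m - u n) (u m - u n)).re < ε) →
      L ∈ D1 ∧ Tendsto (fun n => (q t (u n - L) (u n - L)).re) atTop (nhds 0))
    -- assumption (1): C⁻¹(H(0)+1) ≤ H(t) ≤ C(H(0)+1), C ≥ 1
    (C : ℝ) (hC : 1 ≤ C)
    (hcomp : ∀ t : ℝ, ∀ u : ℋ, u ∈ D1 →
      C⁻¹ * ((q 0 u u).re + ‖u‖ ^ 2) ≤ (q t u u).re ∧
        (q t u u).re ≤ C * ((q 0 u u).re + ‖u‖ ^ 2))
    -- assumption (2): t ↦ H(t)⁻¹ is norm-differentiable and ‖√H(t)(d/dt H(t)⁻¹)√H(t)‖ ≤ C,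
    -- where R t = H(t)⁻¹, R' its norm derivative and sqH t = √H(t) on D1
    (R R' : ℝ → ℋ →L[ℂ] ℋ)
    (hRD1 : ∀ t : ℝ, ∀ v : ℋ, R t v ∈ D1)
    (hRinv : ∀ t : ℝ, ∀ v : ℋ, ∀ u ∈ D1, q t u (R t v) = (inner ℂ u v : ℂ))
    (hR' : ∀ t : ℝ, HasDerivAt R (R' t) t)
    (sqH : ℝ → ℋ → ℋ)
    (hsqH : ∀ t : ℝ, ∀ u v : ℋ, u ∈ D1 → v ∈ D1 →
      (inner ℂ (sqH t u) (sqH t v) : ℂ) = q t u v)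
    (hsqHsym : ∀ t : ℝ, ∀ u v : ℋ, u ∈ D1 → v ∈ D1 →
      (inner ℂ (sqH t u) v : ℂ) = inner ℂ u (sqH t v))
    (hsqHbound : ∀ t : ℝ, ∀ u v : ℋ, u ∈ D1 → v ∈ D1 →
      ‖(inner ℂ (sqH t u) (R' t (sqH t v)) : ℂ)‖ ≤ C * ‖u‖ * ‖v‖)
    -- the propagator U(t,s) of Theorem II.27 of Simon (quadratic forms)
    (U : ℝ → ℝ → ℋ →L[ℂ] ℋ)
    (hUcont : ∀ ψ : ℋ, Continuous fun p : ℝ × ℝ => U p.1 p.2 ψ)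
    (hUnorm : ∀ t s : ℝ, ∀ ψ : ℋ, ‖U t s ψ‖ = ‖ψ‖)
    (hUid : ∀ t : ℝ, U t t = 1)
    (hUck : ∀ t r s : ℝ, (U t r).comp (U r s) = U t s)
    (hUper : ∀ t s : ℝ, U (t + T) (s + T) = U t s)
    (hUD1 : ∀ t : ℝ, ∀ ψ ∈ D1, U t 0 ψ ∈ D1)
    -- point 1: ℋ₁-weak continuity of the trajectories
    (hweakcont : ∀ ψ₀ ∈ D1, ∀ g ∈ D1,
      Continuous fun t => (inner ℂ g (U t 0 ψ₀) : ℂ) + q 0 g (U t 0 ψ₀))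
    -- point 2: the weak Schrödinger equation −i d/dt ⟨g, ψ(t)⟩ + q(t)(g, ψ(t)) = 0
    (hweakSchr : ∀ ψ₀ ∈ D1, ∀ g ∈ D1, ∀ t : ℝ,
      HasDerivAt (fun τ => (inner ℂ g (U τ 0 ψ₀) : ℂ)) (-(Complex.I * q t g (U t 0 ψ₀))) t)
    -- point 3: lim_{t→s} ‖(ψ(t)−ψ(s))/(t−s) + iH(t)ψ(t)‖₋₁ = 0
    (hcond3 : ∀ ψ₀ ∈ D1, ∀ s : ℝ,
      Tendsto (fun t =>
          sSup {r : ℝ | ∃ g ∈ D1, formNorm q g ≤ 1 ∧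
            r = ‖((t - s)⁻¹ : ℝ) • ((inner ℂ (U t 0 ψ₀ - U s 0 ψ₀) g : ℂ))
                  - Complex.I * q t (U t 0 ψ₀) g‖})
        (nhdsWithin s {s}ᶜ) (nhds 0))
    -- a Hilbert basis of eigenvectors of U(T,0), all in ℋ₁
    {ι : Type*} (b : HilbertBasis ι ℂ ℋ)
    (hbD1 : ∀ i, b i ∈ D1)
    (hbeig : ∀ i, ∃ c : ℂ, U T 0 (b i) = c • b i)
    -- an initial state from the (finite) span of the basis
    (ψ : ℋ) (hψ : ψ ∈ Submodule.span ℂ (Set.range fun i => b i)) :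
    ∃ M : ℝ, ∀ t : ℝ, ‖q t (U t 0 ψ) (U t 0 ψ)‖ ≤ M :=
  stmt_4_general T hT D1 q hq_smul hq_add hq_herm hq_pos hq_closed C hC hcomp U hUnorm hUck hUper
    hUD1 hweakcont b hbD1 hbeig ψ hψ
end

section
/- Let A be a self-adjoint operator in ℋ, n ∈ ℤ₊, and X ∈ B(ℋ). Then X ∈ C_{n+1}(A) if and only if ad_A X exists in B(ℋ) and ad_A X ∈ C_n(A); moreover, in that case ad_A^k(ad_A X) = ad_A^{k+1} X for k = 0, 1, …, n. -/
open scoped ComplexOrder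
open Classical

variable {ℋ : Type*} [NormedAddCommGroup ℋ] [InnerProductSpace ℂ ℋ] [CompleteSpace ℋ]

/-- The everywhere-defined extension (by `0` outside the domain) of an unbounded operator
`Aop` with domain the submodule `D`. -/
noncomputable def Aext (D : Submodule ℂ ℋ) (Aop : ↥D →ₗ[ℂ] ℋ) (ψ : ℋ) : ℋ :=
  if h : ψ ∈ D then Aop ⟨ψ, h⟩ else 0

/-- `Dom(A^n)`: the set of vectors to which `A` can be applied `n` times. -/
def domPow (D : Submodule ℂ ℋ) (Aop : ↥D →ₗ[ℂ] ℋ) (n : ℕ) : Set ℋ :=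
  {ψ : ℋ | ∀ k, k < n → (Aext D Aop)^[k] ψ ∈ D}

/-- The sesquilinear form `α_n(ξ,η) = Σ_{k=0}^{n} C(n,k)(−1)^k ⟨X A^k ξ, A^{n−k} η⟩`,
defined (meaningfully) on `Dom(A^n)`. -/
noncomputable def commForm (D : Submodule ℂ ℋ) (Aop : ↥D →ₗ[ℂ] ℋ)
    (X : ℋ →L[ℂ] ℋ) (n : ℕ) (ξ η : ℋ) : ℂ :=
  ∑ k ∈ Finset.range (n + 1),
    (n.choose k : ℂ) * (-1) ^ k *
      (inner ℂ (X ((Aext D Aop)^[k] ξ)) ((Aext D Aop)^[n - k] η) : ℂ)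

/-- `ad_A^n X` exists in `B(ℋ)` and equals the bounded operator `Z`: the form `α_n` is
represented by `Z` on `Dom(A^n)`. -/
def AdExistsN (D : Submodule ℂ ℋ) (Aop : ↥D →ₗ[ℂ] ℋ) (n : ℕ) (X Z : ℋ →L[ℂ] ℋ) : Prop :=
  ∀ ξ ∈ domPow D Aop n, ∀ η ∈ domPow D Aop n,
    commForm D Aop X n ξ η = (inner ℂ (Z ξ) η : ℂ)

/-- `X ∈ C_n(A)`: the multiple commutators `ad_A^k X` exist in `B(ℋ)` for `k = 0,…,n`. -/
def InCn (D : Submodule ℂ ℋ) (Aop : ↥D →ₗ[ℂ] ℋ) (n : ℕ) (X : ℋ →L[ℂ] ℋ) : Prop :=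
  ∀ k, k ≤ n → ∃ Z : ℋ →L[ℂ] ℋ, AdExistsN D Aop k X Z

/-- Self-adjointness of the (in general unbounded) operator `Aop` with domain `D`:
it is densely defined, symmetric, and its domain is maximal. -/
def IsSelfAdjointOp (D : Submodule ℂ ℋ) (Aop : ↥D →ₗ[ℂ] ℋ) : Prop :=
  Dense (D : Set ℋ) ∧
    (∀ u v : ↥D, (inner ℂ (Aop u) (v : ℋ) : ℂ) = inner ℂ (u : ℋ) (Aop v)) ∧
    ∀ v w : ℋ, (∀ u : ↥D, (inner ℂ (Aop u) v : ℂ) = inner ℂ (u : ℋ) w) → v ∈ D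

/-!
Pascal's rule turns the form defining `ad_A^(k+1) X` into the form defining `ad_A^k (ad_A X)`,
but only on `Dom(A^(k+1))`. To reach `Dom(A^k)` we regularize with
`R_m = i(m+1)(A + i(m+1))⁻¹`: since `A` is self-adjoint, `A + it` (`t ≠ 0`) is a bijection from
`Dom(A)` onto `ℋ` with `|t|‖u‖ ≤ ‖(A + it)u‖`, so `R_m` has norm at most `1`, commutes with `A`
on `Dom(A)`, maps `Dom(A^k)` into `Dom(A^(k+1))`, and tends strongly to the identity (first on the
dense set `Dom(A)`, then everywhere by equicontinuity). Both forms are continuous along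
`R_m ξ → ξ`, `A^j R_m ξ = R_m A^j ξ → A^j ξ`, which transfers the identity to `Dom(A^k)`.
-/

open Filter Topology Complex
open scoped InnerProductSpace

lemma CauchySeq.of_norm_sub_le {E F : Type*} [SeminormedAddCommGroup E]
    [SeminormedAddCommGroup F] {a : ℕ → E} {b : ℕ → F} {C : ℝ} (hb : CauchySeq b)
    (h : ∀ m n, ‖a m - a n‖ ≤ C * ‖b m - b n‖) : CauchySeq a := by
  rw [cauchySeq_iff_tendsto_dist_atTop_0] at hb ⊢
  simp only [dist_eq_norm] at hb ⊢
  simpa using squeeze_zero (fun _ => norm_nonneg _) (fun p : ℕ × ℕ => h p.1 p.2)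
    (by simpa using hb.const_mul C)

section

variable {ℋ : Type*} [NormedAddCommGroup ℋ] [InnerProductSpace ℂ ℋ]
  {D : Submodule ℂ ℋ} {Aop : ↥D →ₗ[ℂ] ℋ}

lemma Aext_of_mem {ψ : ℋ} (h : ψ ∈ D) : Aext D Aop ψ = Aop ⟨ψ, h⟩ := dif_pos h

lemma domPow_antitone : Antitone (domPow D Aop) :=
  fun _ _ hkl _ hψ j hj => hψ j (hj.trans_le hkl)

lemma mem_domPow_one {ψ : ℋ} (h : ψ ∈ D) : ψ ∈ domPow D Aop 1 := by
  intro j hj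
  obtain rfl := Nat.lt_one_iff.mp hj
  exact h

def IsSymmetricOp (Aop : ↥D →ₗ[ℂ] ℋ) : Prop :=
  ∀ u v : ↥D, ⟪(Aop u : ℋ), (v : ℋ)⟫_ℂ = ⟪(u : ℋ), Aop v⟫_ℂ

lemma IsSelfAdjointOp.isSymmetricOp (hA : IsSelfAdjointOp D Aop) : IsSymmetricOp Aop := hA.2.1

lemma IsSymmetricOp.im_inner_self_eq_zero (hsym : IsSymmetricOp Aop) (u : ↥D) :
    (⟪Aop u, (u : ℋ)⟫_ℂ).im = 0 :=
  conj_eq_iff_im.mp <| by rw [inner_conj_symm, hsym]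

def addSMulI (Aop : ↥D →ₗ[ℂ] ℋ) (t : ℝ) : ↥D →ₗ[ℂ] ℋ := Aop + ((t : ℂ) * I) • D.subtype

lemma addSMulI_apply (t : ℝ) (u : ↥D) :
    addSMulI Aop t u = Aop u + ((t : ℂ) * I) • (u : ℋ) := rfl

lemma IsSymmetricOp.norm_addSMulI_sq (hsym : IsSymmetricOp Aop) (t : ℝ) (u : ↥D) :
    ‖addSMulI Aop t u‖ ^ 2 = ‖Aop u‖ ^ 2 + t ^ 2 * ‖(u : ℋ)‖ ^ 2 := by
  have hre : RCLike.re ⟪(Aop u : ℋ), ((t : ℂ) * I) • (u : ℋ)⟫_ℂ = 0 := by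
    simp [hsym.im_inner_self_eq_zero u]
  rw [addSMulI_apply, @norm_add_sq ℂ, hre, norm_smul, norm_mul, norm_I, norm_real,
    Real.norm_eq_abs, mul_one, mul_pow, sq_abs]
  ring

lemma IsSymmetricOp.abs_mul_norm_le (hsym : IsSymmetricOp Aop) (t : ℝ) (u : ↥D) :
    |t| * ‖(u : ℋ)‖ ≤ ‖addSMulI Aop t u‖ := by
  refine (pow_le_pow_iff_left₀ (by positivity) (norm_nonneg _) two_ne_zero).mp ?_
  rw [hsym.norm_addSMulI_sq, mul_pow, sq_abs]
  linarith [sq_nonneg ‖Aop u‖]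

lemma IsSymmetricOp.norm_le_norm_addSMulI (hsym : IsSymmetricOp Aop) (t : ℝ) (u : ↥D) :
    ‖Aop u‖ ≤ ‖addSMulI Aop t u‖ := by
  refine (pow_le_pow_iff_left₀ (norm_nonneg _) (norm_nonneg _) two_ne_zero).mp ?_
  rw [hsym.norm_addSMulI_sq]
  nlinarith [sq_nonneg t, sq_nonneg ‖(u : ℋ)‖]

lemma IsSymmetricOp.injective_addSMulI (hsym : IsSymmetricOp Aop) {t : ℝ} (ht : t ≠ 0) :
    Function.Injective (addSMulI Aop t) := by
  refine (injective_iff_map_eq_zero _).mpr fun u hu => ?_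
  have h := hsym.abs_mul_norm_le t u
  rw [hu, norm_zero] at h
  have : ‖(u : ℋ)‖ = 0 := le_antisymm
    (nonpos_of_mul_nonpos_right h (abs_pos.mpr ht)) (norm_nonneg _)
  exact Subtype.ext (norm_eq_zero.mp this)

lemma IsSelfAdjointOp.exists_apply_eq_of_inner (hA : IsSelfAdjointOp D Aop) {v w : ℋ}
    (h : ∀ u : ↥D, ⟪(Aop u : ℋ), v⟫_ℂ = ⟪(u : ℋ), w⟫_ℂ) : ∃ hv : v ∈ D, Aop ⟨v, hv⟩ = w :=
  ⟨hA.2.2 v w h, hA.1.eq_of_inner_right ℂ fun u hu => (hA.2.1 ⟨u, hu⟩ _).symm.trans (h ⟨u, hu⟩)⟩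

lemma IsSelfAdjointOp.exists_apply_eq_of_tendsto (hA : IsSelfAdjointOp D Aop) {u : ℕ → ↥D}
    {x w : ℋ} (hx : Tendsto (fun n => (u n : ℋ)) atTop (𝓝 x))
    (hw : Tendsto (fun n => Aop (u n)) atTop (𝓝 w)) : ∃ hx : x ∈ D, Aop ⟨x, hx⟩ = w :=
  hA.exists_apply_eq_of_inner fun v => tendsto_nhds_unique
    ((tendsto_const_nhds.inner hx).congr fun n => hA.2.1 v (u n)) (tendsto_const_nhds.inner hw)

lemma IsSelfAdjointOp.isClosed_range_addSMulI [CompleteSpace ℋ] (hA : IsSelfAdjointOp D Aop)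
    {t : ℝ} (ht : t ≠ 0) : IsClosed (LinearMap.range (addSMulI Aop t) : Set ℋ) := by
  refine isClosed_of_closure_subset fun z hz => ?_
  obtain ⟨g, hg, hgz⟩ := mem_closure_iff_seq_limit.mp hz
  choose u hu using hg
  have hLu : CauchySeq fun n => addSMulI Aop t (u n) := by simpa only [hu] using hgz.cauchySeq
  obtain ⟨x, hx⟩ := cauchySeq_tendsto_of_complete <|
    hLu.of_norm_sub_le (a := fun n => (u n : ℋ)) (C := |t|⁻¹) fun m n => by
      rw [← Submodule.coe_sub, ← map_sub, le_inv_mul_iff₀ (abs_pos.mpr ht)]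
      exact hA.isSymmetricOp.abs_mul_norm_le t _
  obtain ⟨w, hw⟩ := cauchySeq_tendsto_of_complete <|
    hLu.of_norm_sub_le (a := fun n => Aop (u n)) (C := 1) fun m n => by
      rw [← map_sub, ← map_sub, one_mul]
      exact hA.isSymmetricOp.norm_le_norm_addSMulI t _
  obtain ⟨hxD, rfl⟩ := hA.exists_apply_eq_of_tendsto hx hw
  refine ⟨⟨x, hxD⟩, tendsto_nhds_unique ?_ hgz⟩
  exact (hw.add (hx.const_smul ((t : ℂ) * I))).congr hu

lemma IsSelfAdjointOp.orthogonal_range_addSMulI (hA : IsSelfAdjointOp D Aop) {t : ℝ}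
    (ht : t ≠ 0) : (LinearMap.range (addSMulI Aop t))ᗮ = ⊥ := by
  refine (Submodule.eq_bot_iff _).mpr fun v hv => ?_
  have h : ∀ u : ↥D, ⟪(Aop u : ℋ), v⟫_ℂ = ⟪(u : ℋ), ((t : ℂ) * I) • v⟫_ℂ := fun u => by
    have h0 := Submodule.inner_right_of_mem_orthogonal (LinearMap.mem_range_self _ u) hv
    rw [addSMulI_apply, inner_add_left, inner_smul_left] at h0
    rw [inner_smul_right]
    simp only [map_mul, conj_ofReal, conj_I] at h0
    linear_combination h0
  obtain ⟨hvD, hAv⟩ := hA.exists_apply_eq_of_inner h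
  have hv0 : addSMulI Aop (-t) ⟨v, hvD⟩ = 0 := by
    rw [addSMulI_apply, hAv]
    push_cast
    simp
  exact congrArg Subtype.val
    (hA.isSymmetricOp.injective_addSMulI (neg_ne_zero.mpr ht) (hv0.trans (map_zero _).symm))

lemma IsSelfAdjointOp.surjective_addSMulI [CompleteSpace ℋ] (hA : IsSelfAdjointOp D Aop)
    {t : ℝ} (ht : t ≠ 0) : Function.Surjective (addSMulI Aop t) := by
  rw [← LinearMap.range_eq_top, ← (hA.isClosed_range_addSMulI ht).submodule_topologicalClosure_eq,
    Submodule.topologicalClosure_eq_top_iff]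
  exact hA.orthogonal_range_addSMulI ht

noncomputable def IsSelfAdjointOp.resolventI [CompleteSpace ℋ] (hA : IsSelfAdjointOp D Aop)
    {t : ℝ} (ht : t ≠ 0) : ℋ ≃ₗ[ℂ] ↥D :=
  (LinearEquiv.ofBijective (addSMulI Aop t)
    ⟨hA.isSymmetricOp.injective_addSMulI ht, hA.surjective_addSMulI ht⟩).symm

section resolvent

variable [CompleteSpace ℋ] (hA : IsSelfAdjointOp D Aop) {t : ℝ} (ht : t ≠ 0)

lemma IsSelfAdjointOp.addSMulI_resolventI (y : ℋ) : addSMulI Aop t (hA.resolventI ht y) = y :=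
  LinearEquiv.apply_ofBijective_symm_apply _ _

lemma IsSelfAdjointOp.resolventI_addSMulI (u : ↥D) : hA.resolventI ht (addSMulI Aop t u) = u :=
  LinearEquiv.ofBijective_symm_apply_apply _ _

lemma IsSelfAdjointOp.Aext_resolventI {y : ℋ} (hy : y ∈ D) :
    Aext D Aop (hA.resolventI ht y) = hA.resolventI ht (Aext D Aop y) := by
  set u := hA.resolventI ht y
  have hu : Aop u + ((t : ℂ) * I) • (u : ℋ) = y := hA.addSMulI_resolventI ht y
  have hv : addSMulI Aop t (⟨y, hy⟩ - ((t : ℂ) * I) • u) = Aop ⟨y, hy⟩ := by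
    rw [addSMulI_apply, map_sub, map_smul, Submodule.coe_sub, Submodule.coe_smul]
    linear_combination (norm := module) -(((t : ℂ) * I) • hu)
  rw [Aext_of_mem hy, ← hv, hA.resolventI_addSMulI, Aext_of_mem u.2, Submodule.coe_sub,
    Submodule.coe_smul]
  linear_combination (norm := module) hu

noncomputable def IsSelfAdjointOp.smulResolventI : ℋ →ₗ[ℂ] ℋ :=
  ((t : ℂ) * I) • (D.subtype ∘ₗ (hA.resolventI ht).toLinearMap)

lemma IsSelfAdjointOp.smulResolventI_apply (y : ℋ) :
    hA.smulResolventI ht y = ((t : ℂ) * I) • (hA.resolventI ht y : ℋ) := rfl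

lemma IsSelfAdjointOp.smulResolventI_mem (y : ℋ) : hA.smulResolventI ht y ∈ D :=
  D.smul_mem _ (hA.resolventI ht y).2

lemma IsSelfAdjointOp.norm_smulResolventI_le (y : ℋ) : ‖hA.smulResolventI ht y‖ ≤ ‖y‖ := by
  have h := hA.isSymmetricOp.abs_mul_norm_le t (hA.resolventI ht y)
  rw [hA.addSMulI_resolventI] at h
  simpa [smulResolventI_apply, norm_smul] using h

lemma IsSelfAdjointOp.Aext_smulResolventI {y : ℋ} (hy : y ∈ D) :
    Aext D Aop (hA.smulResolventI ht y) = hA.smulResolventI ht (Aext D Aop y) := by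
  have h : Aext D Aop (hA.smulResolventI ht y)
      = ((t : ℂ) * I) • Aext D Aop (hA.resolventI ht y) := by
    rw [Aext_of_mem (hA.smulResolventI_mem ht y), Aext_of_mem (hA.resolventI ht y).2]
    exact map_smul Aop _ _
  rw [h, hA.Aext_resolventI ht hy, smulResolventI_apply]

lemma IsSelfAdjointOp.norm_smulResolventI_sub_le {y : ℋ} (hy : y ∈ D) :
    |t| * ‖hA.smulResolventI ht y - y‖ ≤ ‖Aext D Aop y‖ := by
  have hu := hA.addSMulI_resolventI ht y
  rw [addSMulI_apply] at hu
  have h : hA.smulResolventI ht y - y = -(hA.resolventI ht (Aext D Aop y) : ℋ) := by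
    rw [← hA.Aext_resolventI ht hy, Aext_of_mem (hA.resolventI ht y).2, smulResolventI_apply]
    linear_combination (norm := module) hu
  have h' := hA.isSymmetricOp.abs_mul_norm_le t (hA.resolventI ht (Aext D Aop y))
  rwa [hA.addSMulI_resolventI, ← norm_neg, ← h] at h'

end resolvent

section approx

variable [CompleteSpace ℋ] (hA : IsSelfAdjointOp D Aop)

noncomputable def IsSelfAdjointOp.approx (m : ℕ) : ℋ →ₗ[ℂ] ℋ :=
  hA.smulResolventI (t := (m : ℝ) + 1) (by positivity)

lemma IsSelfAdjointOp.tendsto_approx_of_mem {y : ℋ} (hy : y ∈ D) :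
    Tendsto (fun m => hA.approx m y) atTop (𝓝 y) := by
  rw [tendsto_iff_norm_sub_tendsto_zero]
  refine squeeze_zero (fun _ => norm_nonneg _) (fun m => ?_)
    (by simpa using tendsto_one_div_add_atTop_nhds_zero_nat.const_mul ‖Aext D Aop y‖)
  have h := hA.norm_smulResolventI_sub_le (t := (m : ℝ) + 1) (by positivity) hy
  rw [abs_of_pos (by positivity)] at h
  rw [← div_eq_mul_inv, le_div_iff₀ (by positivity), mul_comm]
  exact h

lemma IsSelfAdjointOp.tendsto_approx (y : ℋ) : Tendsto (fun m => hA.approx m y) atTop (𝓝 y) := by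
  have hLip : ∀ m, LipschitzWith 1 (hA.approx m) := fun m => by
    simpa using AddMonoidHomClass.lipschitz_of_bound (hA.approx m) 1 fun y => by
      rw [one_mul]
      exact hA.norm_smulResolventI_le _ y
  have hclosed := (LipschitzWith.uniformEquicontinuous _ 1 hLip).equicontinuous
    |>.isClosed_setOfPred_tendsto (l := atTop) continuous_id
  exact hA.1.induction (fun y hy => hA.tendsto_approx_of_mem hy) hclosed y

lemma IsSelfAdjointOp.iterate_Aext_approx {k : ℕ} {ξ : ℋ} (hξ : ξ ∈ domPow D Aop k) (m : ℕ) :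
    ∀ j ≤ k, (Aext D Aop)^[j] (hA.approx m ξ) = hA.approx m ((Aext D Aop)^[j] ξ) := by
  intro j
  induction j with
  | zero => exact fun _ => rfl
  | succ j ih =>
    intro hj
    rw [Function.iterate_succ_apply', ih (by omega), Function.iterate_succ_apply']
    exact hA.Aext_smulResolventI _ (hξ j hj)

lemma IsSelfAdjointOp.approx_mem_domPow {k : ℕ} {ξ : ℋ} (hξ : ξ ∈ domPow D Aop k) (m : ℕ) :
    hA.approx m ξ ∈ domPow D Aop (k + 1) := fun j hj => by
  rw [hA.iterate_Aext_approx hξ m j (by omega)]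
  exact hA.smulResolventI_mem _ _

lemma IsSelfAdjointOp.tendsto_commForm_approx (X : ℋ →L[ℂ] ℋ) {k : ℕ} {ξ η : ℋ}
    (hξ : ξ ∈ domPow D Aop k) (hη : η ∈ domPow D Aop k) :
    Tendsto (fun m => commForm D Aop X k (hA.approx m ξ) (hA.approx m η)) atTop
      (𝓝 (commForm D Aop X k ξ η)) := by
  refine tendsto_finsetSum _ fun i hi => ?_
  have hik : i ≤ k := Nat.lt_succ_iff.mp (Finset.mem_range.mp hi)
  refine ((((X.continuous.tendsto _).comp (hA.tendsto_approx _)).inner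
    (hA.tendsto_approx _)).const_mul _).congr fun m => ?_
  rw [Function.comp_apply, hA.iterate_Aext_approx hξ m i hik,
    hA.iterate_Aext_approx hη m (k - i) (Nat.sub_le k i)]

end approx

lemma commForm_zero (X : ℋ →L[ℂ] ℋ) (ξ η : ℋ) : commForm D Aop X 0 ξ η = ⟪X ξ, η⟫_ℂ := by
  simp [commForm]

lemma adExistsN_zero (X : ℋ →L[ℂ] ℋ) : AdExistsN D Aop 0 X X :=
  fun ξ _ η _ => commForm_zero X ξ η

lemma AdExistsN.inner_apply {X Z : ℋ →L[ℂ] ℋ} (hZ : AdExistsN D Aop 1 X Z) {u v : ℋ}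
    (hu : u ∈ D) (hv : v ∈ D) :
    ⟪Z u, v⟫_ℂ = ⟪X u, Aext D Aop v⟫_ℂ - ⟪X (Aext D Aop u), v⟫_ℂ := by
  rw [← hZ u (mem_domPow_one hu) v (mem_domPow_one hv)]
  simp only [commForm, Finset.sum_range_succ, Finset.range_one, Finset.sum_singleton,
    Nat.choose_succ_self_right, zero_add, Nat.cast_one, pow_zero, mul_one, Function.iterate_zero,
    id_eq, tsub_zero, Function.iterate_one, one_mul, Nat.choose_self, pow_one, tsub_self]
  ring

lemma AdExistsN.commForm_succ {X Z : ℋ →L[ℂ] ℋ} (hZ : AdExistsN D Aop 1 X Z) {k : ℕ}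
    {ξ η : ℋ} (hξ : ξ ∈ domPow D Aop (k + 1)) (hη : η ∈ domPow D Aop (k + 1)) :
    commForm D Aop X (k + 1) ξ η = commForm D Aop Z k ξ η := by
  set f : ℕ → ℕ → ℂ := fun i j => (-1) ^ i * ⟪X ((Aext D Aop)^[i] ξ), (Aext D Aop)^[j] η⟫_ℂ
  have hX : commForm D Aop X (k + 1) ξ η
      = ∑ i ∈ Finset.range (k + 2), ((k + 1).choose i : ℂ) * f i (k + 1 - i) := by
    simp only [commForm, f, mul_assoc]
  rw [hX, Finset.sum_choose_succ_mul, ← Finset.sum_add_distrib, commForm]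
  refine Finset.sum_congr rfl fun i hi => ?_
  have hik : i ≤ k := Nat.lt_succ_iff.mp (Finset.mem_range.mp hi)
  rw [hZ.inner_apply (hξ i (by omega)) (hη (k - i) (by omega)),
    ← Function.iterate_succ_apply' (Aext D Aop), ← Function.iterate_succ_apply' (Aext D Aop),
    ← Nat.succ_sub hik]
  simp only [f]
  ring

lemma AdExistsN.succ {X Z W : ℋ →L[ℂ] ℋ} (hZ : AdExistsN D Aop 1 X Z) {k : ℕ}
    (hW : AdExistsN D Aop k Z W) : AdExistsN D Aop (k + 1) X W :=
  fun ξ hξ η hη => (hZ.commForm_succ hξ hη).trans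
    (hW ξ (domPow_antitone k.le_succ hξ) η (domPow_antitone k.le_succ hη))

lemma IsSelfAdjointOp.adExistsN_of_domPow_succ [CompleteSpace ℋ] (hA : IsSelfAdjointOp D Aop)
    {X W : ℋ →L[ℂ] ℋ} {k : ℕ}
    (h : ∀ ξ ∈ domPow D Aop (k + 1), ∀ η ∈ domPow D Aop (k + 1),
      commForm D Aop X k ξ η = ⟪W ξ, η⟫_ℂ) : AdExistsN D Aop k X W := by
  intro ξ hξ η hη
  refine tendsto_nhds_unique (hA.tendsto_commForm_approx X hξ hη) ?_
  refine (((W.continuous.tendsto _).comp (hA.tendsto_approx ξ)).inner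
    (hA.tendsto_approx η)).congr fun m => ?_
  exact (h _ (hA.approx_mem_domPow hξ m) _ (hA.approx_mem_domPow hη m)).symm

lemma IsSelfAdjointOp.adExistsN_of_adExistsN_succ [CompleteSpace ℋ] (hA : IsSelfAdjointOp D Aop)
    {X Z W : ℋ →L[ℂ] ℋ} {k : ℕ}
    (hZ : AdExistsN D Aop 1 X Z) (hW : AdExistsN D Aop (k + 1) X W) : AdExistsN D Aop k Z W :=
  hA.adExistsN_of_domPow_succ fun ξ hξ η hη => (hZ.commForm_succ hξ hη).symm.trans (hW ξ hξ η hη)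

end

/-- `X ∈ C_{n+1}(A)` iff `ad_A X` exists in `B(ℋ)` and belongs to `C_n(A)`;
moreover in that case `ad_A^k (ad_A X) = ad_A^{k+1} X` for `k = 0,1,…,n`. -/
theorem stmt_13 {ℋ : Type*} [NormedAddCommGroup ℋ] [InnerProductSpace ℂ ℋ] [CompleteSpace ℋ]
    (D : Submodule ℂ ℋ) (Aop : ↥D →ₗ[ℂ] ℋ) (hA : IsSelfAdjointOp D Aop)
    (n : ℕ) (X : ℋ →L[ℂ] ℋ) :
    (InCn D Aop (n + 1) X ↔ ∃ Z : ℋ →L[ℂ] ℋ, AdExistsN D Aop 1 X Z ∧ InCn D Aop n Z) ∧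
      ∀ Z : ℋ →L[ℂ] ℋ, AdExistsN D Aop 1 X Z → ∀ k, k ≤ n →
        ∀ W : ℋ →L[ℂ] ℋ, AdExistsN D Aop k Z W → AdExistsN D Aop (k + 1) X W := by
  refine ⟨⟨fun hX => ?_, fun ⟨Z, hZ, hZC⟩ => ?_⟩, fun Z hZ k _ W hW => hZ.succ hW⟩
  · obtain ⟨Z, hZ⟩ := hX 1 (by omega)
    refine ⟨Z, hZ, fun k hk => ?_⟩
    obtain ⟨W, hW⟩ := hX (k + 1) (by omega)
    exact ⟨W, hA.adExistsN_of_adExistsN_succ hZ hW⟩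
  · rintro (_ | k) hk
    · exact ⟨X, adExistsN_zero X⟩
    · obtain ⟨W, hW⟩ := hZC k (by omega)
      exact ⟨W, hZ.succ hW⟩
end
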